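/- arXiv:1206.0045 — 2 statements merged into one kernel-verified Lean document; each statement's English description precedes it below -/
import Mathlib

section
/- Let u : [0, ∞) → ℝ be continuous and suppose there exist ε > 0 and T ≥ 0 such that u(s) + c ∫₀ˢ u(t)² dt ≤ −ε for all s ≥ T, where c > 0. Then we reach a contradiction; i.e., no continuous u satisfies such a uniform negative bound for all large s. -/
/-! The function `J s = ε + c ∫₀ˢ u²` is positive and, beyond `T`, satisfies `u ≤ -J < 0`,
hence `J' = c u² ≥ c J²`. Comparing with the Riccati equation, `(1 / J)' ≤ -c`, so `1 / J`
would reach `0` within time `1 / (c J T)`, contradicting `J > 0`. -/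

open Set

theorem hasDerivAt_integral_of_continuousOn_Ici {f : ℝ → ℝ} {a s : ℝ}
    (hf : ContinuousOn f (Ici a)) (hs : a < s) :
    HasDerivAt (fun x => ∫ t in a..x, f t) (f s) s := by
  have hfIoi : ContinuousOn f (Ioi a) := hf.mono Ioi_subset_Ici_self
  refine intervalIntegral.integral_hasDerivAt_right ?_
    (hfIoi.stronglyMeasurableAtFilter isOpen_Ioi s hs)
    (hfIoi.continuousAt (isOpen_Ioi.mem_nhds hs))
  exact (hf.mono (by simp [uIcc_of_le hs.le, Icc_subset_Ici_self])).intervalIntegrable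

theorem mul_sub_le_inv_sub_inv_of_mul_sq_le_deriv {J J' : ℝ → ℝ} {c T : ℝ}
    (hderiv : ∀ s, T ≤ s → HasDerivAt J (J' s) s)
    (hJ' : ∀ s, T ≤ s → c * J s ^ 2 ≤ J' s) (hpos : ∀ s, T ≤ s → 0 < J s)
    {s : ℝ} (hs : T ≤ s) :
    c * (s - T) ≤ (J T)⁻¹ - (J s)⁻¹ := by
  have hg : ∀ x, T ≤ x → HasDerivAt (fun x => (J T)⁻¹ - (J x)⁻¹ - c * (x - T))
      (J' x / J x ^ 2 - c) x := by
    intro x hx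
    exact ((((hderiv x hx).inv (hpos x hx).ne').const_sub (J T)⁻¹).sub
      (((hasDerivAt_id x).sub_const T).const_mul c)).congr_deriv (by ring)
  have hmono : MonotoneOn (fun x => (J T)⁻¹ - (J x)⁻¹ - c * (x - T)) (Ici T) := by
    refine monotoneOn_of_hasDerivWithinAt_nonneg (convex_Ici T)
      (fun x hx => (hg x hx).continuousAt.continuousWithinAt)
      (fun x hx => (hg x (interior_subset hx)).hasDerivWithinAt) fun x hx => ?_
    rw [interior_Ici] at hx
    have hJx := hpos x hx.le
    rw [sub_nonneg, le_div_iff₀ (by positivity)]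
    exact hJ' x hx.le
  have hgs := hmono self_mem_Ici hs hs
  simp only [sub_self, mul_zero] at hgs
  linarith

theorem not_forall_pos_of_mul_sq_le_deriv {J J' : ℝ → ℝ} {c T : ℝ} (hc : 0 < c)
    (hderiv : ∀ s, T ≤ s → HasDerivAt J (J' s) s)
    (hJ' : ∀ s, T ≤ s → c * J s ^ 2 ≤ J' s) : ¬ ∀ s, T ≤ s → 0 < J s := by
  intro hpos
  have hJT := hpos T le_rfl
  set s := T + (c * J T)⁻¹
  have hs : T ≤ s := le_add_of_nonneg_right (by positivity)
  have h := mul_sub_le_inv_sub_inv_of_mul_sq_le_deriv hderiv hJ' hpos hs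
  have hcs : c * (s - T) = (J T)⁻¹ := by simp only [s, add_sub_cancel_left]; field_simp
  have hJs := hpos s hs
  have hJs_inv : 0 < (J s)⁻¹ := by positivity
  linarith

theorem guimaraes_no_uniform_negative_bound_general (u : ℝ → ℝ)
    (hu : ContinuousOn u (Set.Ici 0)) (c : ℝ) (hc : 0 < c)
    (ε : ℝ) (hε : 0 < ε) (T : ℝ)
    (hbound : ∀ s, T ≤ s → u s + c * ∫ t in (0:ℝ)..s, u t ^ 2 ≤ -ε) :
    False := by
  set I : ℝ → ℝ := fun s => ∫ t in (0:ℝ)..s, u t ^ 2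
  set J : ℝ → ℝ := fun s => ε + c * I s
  have hpos : ∀ s, 0 ≤ s → 0 < J s := fun s hs =>
    add_pos_of_pos_of_nonneg hε
      (mul_nonneg hc.le (intervalIntegral.integral_nonneg hs fun t _ => sq_nonneg (u t)))
  have hJ_le_neg_u : ∀ s, T ≤ s → J s ≤ -u s := fun s hs => by
    linarith [hbound s hs]
  -- Starting at `max T 1 > 0` makes `u` continuous at every point considered.
  have hs_pos : ∀ s, max T 1 ≤ s → 0 < s := fun s hs =>
    one_pos.trans_le (le_of_max_le_right hs)
  refine not_forall_pos_of_mul_sq_le_deriv (J' := fun s => c * u s ^ 2) (T := max T 1) hc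
    (fun s hs => ?_) (fun s hs => ?_) (fun s hs => hpos s (hs_pos s hs).le)
  · exact ((hasDerivAt_integral_of_continuousOn_Ici (hu.pow 2) (hs_pos s hs)).const_mul
      c).const_add ε
  · have hJs := hpos s (hs_pos s hs).le
    have hJu := hJ_le_neg_u s (le_of_max_le_left hs)
    calc c * J s ^ 2 ≤ c * (-u s) ^ 2 := by gcongr
      _ = c * u s ^ 2 := by rw [neg_sq]

/-- No continuous `u : [0, ∞) → ℝ` satisfies `u s + c ∫₀ˢ u² ≤ -ε` for all `s ≥ T`,
where `c > 0`, `ε > 0`, `T ≥ 0`. -/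
theorem guimaraes_no_uniform_negative_bound (u : ℝ → ℝ)
    (hu : ContinuousOn u (Set.Ici 0)) (c : ℝ) (hc : 0 < c)
    (ε : ℝ) (hε : 0 < ε) (T : ℝ) (hT : 0 ≤ T)
    (hbound : ∀ s, T ≤ s → u s + c * ∫ t in (0:ℝ)..s, u t ^ 2 ≤ -ε) :
    False :=
  guimaraes_no_uniform_negative_bound_general u hu c hc ε hε T hbound
end

section
/- Let n ≥ 3, θ : [0, ∞) → ℝ be C¹ with θ'(t) + θ(t)²/(n−2) ≤ 0 for all t ≥ 0 and θ(0) ≤ 0. Then ∫₀^∞ θ(t)² dt = 0 and θ(0) = 0. -/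
/-!
If `θ' ≤ -θ² / c` with `c > 0`, then `θ` is nonincreasing, and wherever `θ < 0` the function
`1 / θ` increases at rate at least `1 / c`. Starting from a negative value, `1 / θ` would thus
reach `0` in finite time, which is impossible; so `θ` can never become negative, and with
`θ 0 ≤ 0` and monotonicity it vanishes identically on `[0, ∞)`.
-/

open Set

lemma antitoneOn_Ici_of_hasDerivAt_nonpos {f f' : ℝ → ℝ} {a : ℝ}
    (hf : ∀ t ∈ Ici a, HasDerivAt f (f' t) t) (hf' : ∀ t ∈ Ici a, f' t ≤ 0) :
    AntitoneOn f (Ici a) :=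
  antitoneOn_of_hasDerivWithinAt_nonpos (convex_Ici a)
    (fun t ht ↦ (hf t ht).continuousAt.continuousWithinAt)
    (fun t ht ↦ (hf t (interior_subset ht)).hasDerivWithinAt)
    (fun t ht ↦ hf' t (interior_subset ht))

lemma monotoneOn_Ici_of_hasDerivAt_nonneg {f f' : ℝ → ℝ} {a : ℝ}
    (hf : ∀ t ∈ Ici a, HasDerivAt f (f' t) t) (hf' : ∀ t ∈ Ici a, 0 ≤ f' t) :
    MonotoneOn f (Ici a) :=
  monotoneOn_of_hasDerivWithinAt_nonneg (convex_Ici a)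
    (fun t ht ↦ (hf t ht).continuousAt.continuousWithinAt)
    (fun t ht ↦ (hf t (interior_subset ht)).hasDerivWithinAt)
    (fun t ht ↦ hf' t (interior_subset ht))

section Riccati

variable {f f' : ℝ → ℝ} {a c : ℝ}

lemma antitoneOn_of_riccati (hc : 0 < c) (hf : ∀ t ∈ Ici a, HasDerivAt f (f' t) t)
    (hineq : ∀ t ∈ Ici a, f' t + f t ^ 2 / c ≤ 0) : AntitoneOn f (Ici a) :=
  antitoneOn_Ici_of_hasDerivAt_nonpos hf fun t ht ↦ by
    have : 0 ≤ f t ^ 2 / c := by positivity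
    linarith [hineq t ht]

lemma monotoneOn_inv_sub_of_riccati (hf : ∀ t ∈ Ici a, HasDerivAt f (f' t) t)
    (hineq : ∀ t ∈ Ici a, f' t + f t ^ 2 / c ≤ 0) (hneg : ∀ t ∈ Ici a, f t < 0) :
    MonotoneOn (fun t ↦ (f t)⁻¹ - t / c) (Ici a) := by
  refine monotoneOn_Ici_of_hasDerivAt_nonneg
    (fun t ht ↦ ((hf t ht).inv (hneg t ht).ne).sub ((hasDerivAt_id t).div_const c)) fun t ht ↦ ?_
  have hsq : 0 < f t ^ 2 := by have := (hneg t ht).ne; positivity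
  rw [sub_nonneg, le_div_iff₀ hsq, one_div, ← div_eq_inv_mul]
  linarith [hineq t ht]

lemma not_forall_neg_of_riccati (hc : 0 < c) (hf : ∀ t ∈ Ici a, HasDerivAt f (f' t) t)
    (hineq : ∀ t ∈ Ici a, f' t + f t ^ 2 / c ≤ 0) : ¬ ∀ t ∈ Ici a, f t < 0 := by
  intro hneg
  have hfa : (f a)⁻¹ < 0 := inv_lt_zero.2 (hneg a self_mem_Ici)
  -- `1 / f - t / c` is nondecreasing, so `1 / f` reaches `0` at time `a - c / f a`.
  set T := a - c * (f a)⁻¹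
  have haT : a ≤ T := by linarith [mul_neg_of_pos_of_neg hc hfa]
  have hmono := monotoneOn_inv_sub_of_riccati hf hineq hneg self_mem_Ici haT haT
  have hfT : (f T)⁻¹ < 0 := inv_lt_zero.2 (hneg T haT)
  have hTc : T / c = a / c - (f a)⁻¹ := by simp only [T]; field_simp
  linarith

lemma eqOn_zero_of_riccati (hc : 0 < c) (hf : ∀ t ∈ Ici a, HasDerivAt f (f' t) t)
    (hineq : ∀ t ∈ Ici a, f' t + f t ^ 2 / c ≤ 0) (ha : f a ≤ 0) : EqOn f 0 (Ici a) := by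
  intro t ht
  have hanti := antitoneOn_of_riccati hc hf hineq
  have hft : f t ≤ 0 := (hanti self_mem_Ici ht ht).trans ha
  refine hft.eq_or_lt.resolve_right fun hlt ↦ ?_
  have hsub : Ici t ⊆ Ici a := Ici_subset_Ici.2 ht
  exact not_forall_neg_of_riccati hc (fun s hs ↦ hf s (hsub hs)) (fun s hs ↦ hineq s (hsub hs))
    fun s hs ↦ (hanti ht (hsub hs) hs).trans_lt hlt

end Riccati

theorem raychaudhuri_integral_vanishes_general (n : ℕ) (hn : 3 ≤ n) (θ θ' : ℝ → ℝ)
    (hderiv : ∀ t ∈ Set.Ici (0:ℝ), HasDerivAt θ (θ' t) t)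
    (hineq : ∀ t ∈ Set.Ici (0:ℝ), θ' t + θ t ^ 2 / ((n : ℝ) - 2) ≤ 0)
    (h0 : θ 0 ≤ 0) :
    (∫ t in Set.Ioi (0:ℝ), θ t ^ 2) = 0 ∧ θ 0 = 0 := by
  have hc : (0:ℝ) < n - 2 := by
    have : (3:ℝ) ≤ n := by exact_mod_cast hn
    linarith
  have hzero := eqOn_zero_of_riccati hc hderiv hineq h0
  refine ⟨MeasureTheory.setIntegral_eq_zero_of_forall_eq_zero fun t ht ↦ ?_, hzero self_mem_Ici⟩
  simp [hzero (mem_Ici_of_Ioi ht)]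

/-- If `θ` is C¹ on `[0, ∞)` with `θ' + θ²/(n-2) ≤ 0` (`n ≥ 3`) and `θ 0 ≤ 0`, then
`∫₀^∞ θ² = 0` and `θ 0 = 0`. -/
theorem raychaudhuri_integral_vanishes (n : ℕ) (hn : 3 ≤ n) (θ θ' : ℝ → ℝ)
    (hderiv : ∀ t ∈ Set.Ici (0:ℝ), HasDerivAt θ (θ' t) t)
    (hcont : ContinuousOn θ' (Set.Ici 0))
    (hineq : ∀ t ∈ Set.Ici (0:ℝ), θ' t + θ t ^ 2 / ((n : ℝ) - 2) ≤ 0)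
    (h0 : θ 0 ≤ 0) :
    (∫ t in Set.Ioi (0:ℝ), θ t ^ 2) = 0 ∧ θ 0 = 0 :=
  raychaudhuri_integral_vanishes_general n hn θ θ' hderiv hineq h0
end
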